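/- With the group $S = \{u(a,b) : a,b \in GF(q)\}$ and subgroup $S_1 = \{u(a,b): a,b \in GF(s)\}$ as above, the normalizer in $S$ of the coset $Z(S_1)u(1,0)$ (i.e. the set of $x \in S$ with $x^{-1}(Z(S_1)u(1,0))x = Z(S_1)u(1,0)$) equals $\{u(c,d) : c,d \in GF(q),\ c + \pi(c) \in GF(s)\}$, and this set coincides with $N_S(S_1)$. -/

import Mathlib

/-!
Conjugating `u = (a, b)` by `x = (c, d)` gives `(a, b + c π(a) + a π(c))`, so `x` normalizes the
coset iff `c + π(c) ∈ GF(s)`, and normalizes `S₁` iff `c ∈ GF(s)`. The two conditions agree: `π²` is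
the Frobenius of `GF(q)`, so `c + π(c) ∈ GF(s)` gives `c² + c ∈ GF(s)`, whence the Frobenius `φ` of
`GF(s)` moves `c` by `0` or `1`. Moving it by `1` would make `c` a point of period `2` of `φ`, which
is impossible since `φ` has odd order `[GF(q) : GF(s)]`.
-/

open Polynomial in
theorem Subfield.mem_iff_pow_card_eq_self {K : Type*} [Field K] (F : Subfield K) [Finite F]
    {x : K} : x ∈ F ↔ x ^ Nat.card F = x := by
  let _ := Fintype.ofFinite F
  have hq : 1 < Fintype.card F := Fintype.one_lt_card
  have hsplit : Splits (X ^ Fintype.card F - X : F[X]) := by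
    rw [splits_iff_card_roots, FiniteField.roots_X_pow_card_sub_X, ← Finset.card_def,
      Finset.card_univ, FiniteField.X_pow_card_sub_X_natDegree_eq _ hq]
  have := FiniteField.roots_X_pow_card_sub_X F ▸ hsplit.roots_map F.subtype ▸
    Multiset.mem_map (b := x)
  simpa [sub_eq_zero, iff_comm, FiniteField.X_pow_card_sub_X_ne_zero K hq] using this

theorem CharTwo.eq_of_map_sq_add_self_eq {K : Type*} [Field K] [CharP K 2] (φ : K →+* K)
    {c : K} {t : ℕ} (ht : Odd t) (hperiod : φ^[t] c = c) (hfix : φ (c ^ 2 + c) = c ^ 2 + c) :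
    φ c = c := by
  have hsq : (φ c + c) * (φ c + c + 1) = 0 := by
    rw [map_add, map_pow] at hfix
    linear_combination hfix + (c * φ c + c ^ 2 + c) * CharTwo.two_eq_zero (R := K)
  rcases mul_eq_zero.mp hsq with h | h
  · exact CharTwo.add_eq_zero.mp h
  · have hφc : φ c = c + 1 := by linear_combination h - (c + 1) * CharTwo.two_eq_zero (R := K)
    have h2 : Function.IsPeriodicPt φ 2 c := by
      show φ (φ c) = c
      rw [hφc, map_add, hφc, map_one, add_assoc, CharTwo.add_self_eq_zero, add_zero]
    obtain ⟨k, rfl⟩ := ht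
    have hφ_odd : φ^[2 * k + 1] c = φ c := by
      rw [Function.iterate_succ_apply', (h2.mul_const k).eq]
    rw [hperiod, hφc] at hφ_odd
    exact absurd (by linear_combination -hφ_odd : (1 : K) = 0) one_ne_zero

theorem add_pow_two_pow_succ_mem_iff {K : Type*} [Field K] [CharP K 2] {m k t : ℕ}
    (hK : Nat.card K = 2 ^ (2 * m + 1)) (F : Subfield K) (hF : Nat.card F = 2 ^ k)
    (hkt : k * t = 2 * m + 1) {c : K} : c + c ^ 2 ^ (m + 1) ∈ F ↔ c ∈ F := by
  have : Finite K := Nat.finite_of_card_ne_zero (by simp [hK])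
  have hpow : ∀ x : K, x ^ 2 ^ (2 * m + 1) = x := by
    let _ := Fintype.ofFinite K
    intro x
    rw [← hK, Nat.card_eq_fintype_card]
    exact FiniteField.pow_card x
  refine ⟨fun hw => ?_, fun hc => add_mem hc (pow_mem hc _)⟩
  -- `x ↦ x ^ 2 ^ (m + 1)` squares to the Frobenius, so `w + π w = c ^ 2 + c` for `w = c + π c`.
  have hsq_add : c ^ 2 + c ∈ F := by
    have hππ : (c ^ 2 ^ (m + 1)) ^ 2 ^ (m + 1) = c ^ 2 := by
      rw [← pow_mul, ← pow_add, show m + 1 + (m + 1) = 2 * m + 1 + 1 by ring, pow_succ, pow_mul,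
        hpow]
    convert add_mem hw (pow_mem hw (2 ^ (m + 1))) using 1
    rw [add_pow_char_pow, hππ]
    linear_combination -c ^ 2 ^ (m + 1) * CharTwo.two_eq_zero (R := K)
  let φ := iterateFrobenius K 2 k
  have hφ : ∀ x, φ x = x ^ Nat.card F := fun x => by rw [hF]; rfl
  rw [F.mem_iff_pow_card_eq_self, ← hφ]
  refine CharTwo.eq_of_map_sq_add_self_eq φ (t := t) ?_ ?_ ?_
  · exact (Nat.odd_mul.mp (hkt ▸ odd_two_mul_add_one m)).2
  · rw [← iterateFrobenius_mul_apply, hkt, iterateFrobenius_def, hpow]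
  · rw [hφ]
    exact F.mem_iff_pow_card_eq_self.mp hsq_add

theorem conj_eq_of_map_add {R : Type*} [CommRing R] [CharP R 2] (π : R → R)
    (hπ : ∀ a b, π (a + b) = π a + π b) (x u : R × R) :
    let mul : R × R → R × R → R × R := fun u v => (u.1 + v.1, v.1 * π u.1 + u.2 + v.2)
    let inv : R × R → R × R := fun u => (u.1, u.2 + u.1 * π u.1)
    mul (mul (inv x) u) x = (u.1, u.2 + x.1 * π u.1 + u.1 * π x.1) := by
  intro mul inv
  simp only [mul, inv, hπ, Prod.mk.injEq]
  exact ⟨by linear_combination x.1 * CharTwo.two_eq_zero (R := R),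
    by linear_combination (x.1 * π x.1 + x.2) * CharTwo.two_eq_zero (R := R)⟩

theorem stmt6_general (m p t : ℕ) (ht : (2*p+1) * t = 2*m+1)
    (F : Subfield (GaloisField 2 (2*m+1))) (hF : Nat.card F = 2 ^ (2*p+1)) :
    let K := GaloisField 2 (2*m+1)
    let π : K → K := fun x => x ^ (2 ^ (m+1))
    let mul : K × K → K × K → K × K := fun u v => (u.1 + v.1, v.1 * π u.1 + u.2 + v.2)
    let inv : K × K → K × K := fun u => (u.1, u.2 + u.1 * π u.1)
    let S1 : Set (K × K) := {u | u.1 ∈ F ∧ u.2 ∈ F}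
    let coset : Set (K × K) := {u | u.1 = 1 ∧ u.2 ∈ F}
    let Ncoset : Set (K × K) := {x | ∀ u ∈ coset, mul (mul (inv x) u) x ∈ coset}
    let NS1 : Set (K × K) := {x | ∀ u ∈ S1, mul (mul (inv x) u) x ∈ S1}
    Ncoset = {x : K × K | x.1 + π x.1 ∈ F} ∧
    Ncoset = NS1 := by
  intro K π mul inv S1 coset Ncoset NS1
  have hconj : ∀ x u, mul (mul (inv x) u) x = (u.1, u.2 + x.1 * π u.1 + u.1 * π x.1) :=
    conj_eq_of_map_add π fun a b => add_pow_char_pow a b 2 (m + 1)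
  have hπ_one : π 1 = 1 := one_pow _
  have hmem_iff : ∀ c : K, c + π c ∈ F ↔ c ∈ F :=
    fun c => add_pow_two_pow_succ_mem_iff (GaloisField.card 2 _ (by omega)) F hF ht
  have hNcoset : Ncoset = {x | x.1 + π x.1 ∈ F} := by
    ext x
    simp only [Ncoset, coset, hconj]
    refine ⟨fun h => ?_, fun hx u ⟨hu1, hu2⟩ => ⟨hu1, ?_⟩⟩
    · simpa [hπ_one] using (h (1, 0) ⟨rfl, zero_mem F⟩).2
    · simpa [hu1, hπ_one, add_assoc] using add_mem hu2 hx
  have hNS1 : NS1 = {x | x.1 + π x.1 ∈ F} := by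
    ext x
    simp only [NS1, S1, hconj]
    refine ⟨fun h => ?_, fun hx u ⟨hu1, hu2⟩ => ⟨hu1, ?_⟩⟩
    · simpa [hπ_one] using (h (1, 0) ⟨one_mem F, zero_mem F⟩).2
    · have hx1 : x.1 ∈ F := (hmem_iff x.1).mp hx
      exact add_mem (add_mem hu2 (mul_mem hx1 (pow_mem hu1 _))) (mul_mem hu1 (pow_mem hx1 _))
  exact ⟨hNcoset, hNcoset.trans hNS1.symm⟩

/-- With `S`, `S₁` as before, the normalizer in `S` of the coset
    `Z(S₁)u(1,0) = {u(1,b) : b ∈ GF(s)}` equals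
    `{u(c,d) : c,d ∈ GF(q), c + π(c) ∈ GF(s)}`, and this set coincides with
    the normalizer `N_S(S₁)`. -/
theorem stmt6 (m p t : ℕ) (hm : 1 ≤ m) (ht1 : 1 < t) (ht : (2*p+1) * t = 2*m+1)
    (F : Subfield (GaloisField 2 (2*m+1))) (hF : Nat.card F = 2 ^ (2*p+1)) :
    let K := GaloisField 2 (2*m+1)
    let π : K → K := fun x => x ^ (2 ^ (m+1))
    let mul : K × K → K × K → K × K := fun u v => (u.1 + v.1, v.1 * π u.1 + u.2 + v.2)
    let inv : K × K → K × K := fun u => (u.1, u.2 + u.1 * π u.1)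
    let S1 : Set (K × K) := {u | u.1 ∈ F ∧ u.2 ∈ F}
    let coset : Set (K × K) := {u | u.1 = 1 ∧ u.2 ∈ F}
    let Ncoset : Set (K × K) := {x | ∀ u ∈ coset, mul (mul (inv x) u) x ∈ coset}
    let NS1 : Set (K × K) := {x | ∀ u ∈ S1, mul (mul (inv x) u) x ∈ S1}
    Ncoset = {x : K × K | x.1 + π x.1 ∈ F} ∧
    Ncoset = NS1 :=
  stmt6_general m p t ht F hF
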